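/- arXiv:2103.16232 — 2 statements merged into one kernel-verified Lean document; each statement's English description precedes it below -/
import Mathlib

section
/- Let z = (W, b₁, b₂, V) ∈ Ω_θ and define z̄ = (W, b̄₁, b̄₂, V) by (b̄₁)_j = max{(b₁)_j, −α} for all j and (b̄₂)_j = max{(b₂)_j, −α} for all j. Then z̄ is the Euclidean projection of z onto Ω₃, z̄ ∈ Z = Ω₂ ∩ Ω₃, and O(z̄) = O(z). -/
open scoped BigOperators

noncomputable section

/-- A point `z = (W, b₁, b₂, V)`. -/
abbrev Pt (N N₀ N₁ : ℕ) : Type :=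
  Matrix (Fin N₁) (Fin N₀) ℝ × (Fin N₁ → ℝ) × (Fin N₀ → ℝ) × Matrix (Fin N₁) (Fin N) ℝ

/-- ReLU: positive part. -/
def relu (y : ℝ) : ℝ := max y 0

variable {N N₀ N₁ : ℕ}

/-- squared Euclidean norm of a point `z = (W,b₁,b₂,V)`. -/
def sqnormPt (z : Pt N N₀ N₁) : ℝ :=
  (∑ i, ∑ j, (z.1 i j) ^ 2) + (∑ i, (z.2.1 i) ^ 2) + (∑ j, (z.2.2.1 j) ^ 2)
    + (∑ i, ∑ n, (z.2.2.2 i n) ^ 2)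

/-- Euclidean norm of a point. -/
def normPt (z : Pt N N₀ N₁) : ℝ := Real.sqrt (sqnormPt z)

/-- Euclidean distance between points. -/
def distPt (z z' : Pt N N₀ N₁) : ℝ := normPt (z - z')

/-- `(W xₙ + b₁)ᵢ`. -/
def preact (X : Matrix (Fin N₀) (Fin N) ℝ) (z : Pt N N₀ N₁) (i : Fin N₁) (n : Fin N) : ℝ :=
  (∑ j, z.1 i j * X j n) + z.2.1 i

/-- `(Wᵀ vₙ + b₂)ⱼ`. -/
def outPre (z : Pt N N₀ N₁) (j : Fin N₀) (n : Fin N) : ℝ :=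
  (∑ i, z.1 i j * z.2.2.2 i n) + z.2.2.1 j

/-- fidelity term `F(z)`. -/
def Fv (X : Matrix (Fin N₀) (Fin N) ℝ) (z : Pt N N₀ N₁) : ℝ :=
  (1 / (N : ℝ)) * ∑ n, ∑ j, (relu (outPre z j n) - X j n) ^ 2

/-- regularization term `R(z)`. -/
def Rv (lam₁ lam₂ : ℝ) (z : Pt N N₀ N₁) : ℝ :=
  lam₁ * (∑ n, ∑ i, z.2.2.2 i n) + lam₂ * ∑ i, ∑ j, (z.1 i j) ^ 2

/-- penalty term `P(z)`. -/
def Pv (β : ℝ) (X : Matrix (Fin N₀) (Fin N) ℝ) (z : Pt N N₀ N₁) : ℝ :=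
  β * ∑ n, ∑ i, (z.2.2.2 i n - relu (preact X z i n))

/-- objective `O(z) = F(z) + R(z) + P(z)`. -/
def Ov (lam₁ lam₂ β : ℝ) (X : Matrix (Fin N₀) (Fin N) ℝ) (z : Pt N N₀ N₁) : ℝ :=
  Fv X z + Rv lam₁ lam₂ z + Pv β X z

/-- `Ω₁ = {z : vₙ = (Wxₙ + b₁)₊}`. -/
def Omega1 (X : Matrix (Fin N₀) (Fin N) ℝ) : Set (Pt N N₀ N₁) :=
  {z | ∀ i n, z.2.2.2 i n = relu (preact X z i n)}

/-- `Ω₂ = {z : vₙ ≥ (Wxₙ + b₁)₊}`. -/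
def Omega2 (X : Matrix (Fin N₀) (Fin N) ℝ) : Set (Pt N N₀ N₁) :=
  {z | ∀ i n, relu (preact X z i n) ≤ z.2.2.2 i n}

/-- level set `Ω_θ = {z ∈ Ω₂ : O(z) ≤ θ}` (also used for `Ω_δ`). -/
def OmegaLev (lam₁ lam₂ β θ : ℝ) (X : Matrix (Fin N₀) (Fin N) ℝ) : Set (Pt N N₀ N₁) :=
  {z | z ∈ Omega2 X ∧ Ov lam₁ lam₂ β X z ≤ θ}

/-- `‖X‖₁`: maximum absolute column sum. -/
def Xcol1 (X : Matrix (Fin N₀) (Fin N) ℝ) : ℝ := ⨆ n, ∑ j, |X j n|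

/-- the constant `α`. -/
def alphaC (N N₀ N₁ : ℕ) (lam₁ lam₂ θ : ℝ) (X : Matrix (Fin N₀) (Fin N) ℝ) : ℝ :=
  max (θ / lam₁ + Real.sqrt ((N₁ : ℝ) * (N₀ : ℝ) * θ / lam₂) * Xcol1 X)
      (θ * Real.sqrt ((N₁ : ℝ) * (N₀ : ℝ) * θ) / (lam₁ * Real.sqrt lam₂)
        + Real.sqrt ((N : ℝ) * θ) + Xcol1 X)

/-- `Ω₃ = {z : ‖b₁‖_∞ ≤ α, ‖b₂‖_∞ ≤ α}`. -/
def Omega3 (lam₁ lam₂ θ : ℝ) (X : Matrix (Fin N₀) (Fin N) ℝ) : Set (Pt N N₀ N₁) :=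
  {z | (∀ i, |z.2.1 i| ≤ alphaC N N₀ N₁ lam₁ lam₂ θ X) ∧
       (∀ j, |z.2.2.1 j| ≤ alphaC N N₀ N₁ lam₁ lam₂ θ X)}

/-- `Z = Ω₂ ∩ Ω₃`. -/
def Zset (lam₁ lam₂ θ : ℝ) (X : Matrix (Fin N₀) (Fin N) ℝ) : Set (Pt N N₀ N₁) :=
  Omega2 X ∩ Omega3 lam₁ lam₂ θ X

/-- tangent cone of `C` at `zb`. -/
def TangentCone (C : Set (Pt N N₀ N₁)) (zb : Pt N N₀ N₁) : Set (Pt N N₀ N₁) :=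
  {d | ∃ zs : ℕ → Pt N N₀ N₁, ∃ ts : ℕ → ℝ,
      (∀ k, zs k ∈ C) ∧ (∀ k, 0 < ts k) ∧
      Filter.Tendsto ts Filter.atTop (nhds 0) ∧
      Filter.Tendsto (fun k => distPt (zs k) zb) Filter.atTop (nhds 0) ∧
      Filter.Tendsto (fun k => normPt ((ts k)⁻¹ • (zs k - zb) - d)) Filter.atTop (nhds 0)}

/-- `zb` is a d-stationary point of `f` over `C`:
`liminf_{t↓0} (f(zb + t d) - f(zb))/t ≥ 0` for every tangent direction `d`. -/
def DStationary (f : Pt N N₀ N₁ → ℝ) (C : Set (Pt N N₀ N₁)) (zb : Pt N N₀ N₁) : Prop :=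
  zb ∈ C ∧ ∀ d ∈ TangentCone C zb, ∀ ε : ℝ, 0 < ε → ∃ δ : ℝ, 0 < δ ∧
    ∀ t : ℝ, 0 < t → t < δ → -ε < (f (zb + t • d) - f zb) / t

/-- smoothing function `s_μ` of the ReLU. -/
def smoothRelu (μ y : ℝ) : ℝ :=
  if y < 0 then 0 else if y ≤ μ then y ^ 2 / (2 * μ) else y - μ / 2

/-- smoothed fidelity term `F̃(z, μ)`. -/
def Ftil (X : Matrix (Fin N₀) (Fin N) ℝ) (z : Pt N N₀ N₁) (μ : ℝ) : ℝ :=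
  (1 / (N : ℝ)) * (∑ n, ∑ j, (relu (outPre z j n)) ^ 2)
    + (1 / (N : ℝ)) * (∑ j, ∑ n, (X j n) ^ 2)
    - (2 / (N : ℝ)) * ∑ n, ∑ j, X j n * smoothRelu μ (outPre z j n)

/-- smoothed penalty term `P̃(z, μ)`. -/
def Ptil (β : ℝ) (X : Matrix (Fin N₀) (Fin N) ℝ) (z : Pt N N₀ N₁) (μ : ℝ) : ℝ :=
  β * ∑ n, ∑ i, (z.2.2.2 i n - smoothRelu μ (preact X z i n))

/-- smoothed objective `Õ(z, μ)`. -/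
def Otil (lam₁ lam₂ β : ℝ) (X : Matrix (Fin N₀) (Fin N) ℝ) (z : Pt N N₀ N₁) (μ : ℝ) : ℝ :=
  Ftil X z μ + Ptil β X z μ + Rv lam₁ lam₂ z

/-!
On `Ω_θ` every term of `O` is nonnegative and `vₙ ≥ 0`, so `λ₁ ∑ₙ eᵀvₙ ≤ θ`, `λ₂ ‖W‖_F² ≤ θ` and
`F(z) ≤ θ`. These bound `|Wxₙ|` by `α - θ/λ₁` and `|Wᵀvₙ|` by `α - √(Nθ) - ‖X‖₁`. Then
`Wxₙ + b₁ ≤ vₙ ≤ θ/λ₁` gives `b₁ ≤ α`, and `|(Wᵀvₙ + b₂)₊ - xₙ| ≤ √(Nθ)` gives `b₂ ≤ α`: only the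
lower bounds of the box `Ω₃` can fail, so its projection is `b ↦ max b (-α)` coordinatewise.
Raising a bias entry to `-α` changes no ReLU, because the rest of its pre-activation is at most `α`;
hence `Ω₂`-membership and the value of `O` survive the projection.
-/

open Finset

theorem relu_add_max_neg_eq {c A : ℝ} (b : ℝ) (hc : c ≤ A) :
    relu (c + max b (-A)) = relu (c + b) := by
  rcases le_total (-A) b with h | h
  · rw [max_eq_left h]
  · rw [max_eq_right h, relu, relu, max_eq_right (by linarith), max_eq_right (by linarith)]

theorem sq_sub_max_neg_le (b : ℝ) {w A : ℝ} (hw : |w| ≤ A) :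
    (b - max b (-A)) ^ 2 ≤ (b - w) ^ 2 := by
  rcases le_total (-A) b with h | h
  · simpa [max_eq_left h] using sq_nonneg (b - w)
  · rw [max_eq_right h]
    nlinarith [neg_abs_le w]

theorem single_le_sum_sum {ι κ M : Type*} [Fintype ι] [Fintype κ] [AddCommMonoid M]
    [PartialOrder M] [IsOrderedAddMonoid M] {f : ι → κ → M} (hf : ∀ i j, 0 ≤ f i j)
    (i : ι) (j : κ) : f i j ≤ ∑ i, ∑ j, f i j :=
  (single_le_sum (fun j _ => hf i j) (mem_univ j)).trans
    (single_le_sum (fun i _ => sum_nonneg fun j _ => hf i j) (mem_univ i))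

theorem abs_sum_mul_le {ι : Type*} [Fintype ι] {a x : ι → ℝ} {M : ℝ} (ha : ∀ i, |a i| ≤ M) :
    |∑ i, a i * x i| ≤ M * ∑ i, |x i| :=
  calc |∑ i, a i * x i| ≤ ∑ i, |a i| * |x i| := by
        simpa only [abs_mul] using abs_sum_le_sum_abs (fun i => a i * x i) univ
    _ ≤ ∑ i, M * |x i| := sum_le_sum fun i _ => mul_le_mul_of_nonneg_right (ha i) (abs_nonneg _)
    _ = M * ∑ i, |x i| := (mul_sum ..).symm

theorem abs_le_sqrt_of_mul_sum_sq_le {m k : ℕ} {W : Matrix (Fin m) (Fin k) ℝ} {c θ : ℝ}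
    (hc : 0 < c) (hW : c * ∑ i, ∑ j, W i j ^ 2 ≤ θ) (i : Fin m) (j : Fin k) :
    |W i j| ≤ √((m : ℝ) * k * θ / c) := by
  have hmk : (1 : ℝ) ≤ m * k := by
    have : 1 ≤ m * k := Nat.one_le_iff_ne_zero.mpr (Nat.mul_ne_zero i.pos.ne' j.pos.ne')
    exact_mod_cast this
  have hθ : 0 ≤ θ := le_trans (by positivity) hW
  apply Real.abs_le_sqrt
  calc W i j ^ 2 ≤ ∑ i, ∑ j, W i j ^ 2 := single_le_sum_sum (fun _ _ => sq_nonneg _) i j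
    _ ≤ θ / c := by rw [le_div_iff₀ hc]; linarith
    _ ≤ m * k * θ / c := div_le_div_of_nonneg_right (le_mul_of_one_le_left hθ hmk) hc.le

section Xcol1

variable {N N₀ : ℕ} (X : Matrix (Fin N₀) (Fin N) ℝ)

theorem sum_abs_le_Xcol1 (n : Fin N) : ∑ j, |X j n| ≤ Xcol1 X :=
  le_ciSup (f := fun n => ∑ j, |X j n|) (Set.finite_range _).bddAbove n

theorem abs_le_Xcol1 (j : Fin N₀) (n : Fin N) : |X j n| ≤ Xcol1 X :=
  (single_le_sum (fun j _ => abs_nonneg (X j n)) (mem_univ j)).trans (sum_abs_le_Xcol1 X n)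

theorem Xcol1_nonneg : 0 ≤ Xcol1 X :=
  Real.iSup_nonneg fun _ => sum_nonneg fun _ _ => abs_nonneg _

end Xcol1

section LevelSet

variable {N N₀ N₁ : ℕ} {lam₁ lam₂ β θ : ℝ} {X : Matrix (Fin N₀) (Fin N) ℝ} {z : Pt N N₀ N₁}

theorem nonneg_of_mem_Omega2 (hz : z ∈ Omega2 X) (i : Fin N₁) (n : Fin N) : 0 ≤ z.2.2.2 i n :=
  (le_max_right _ _).trans (hz i n)

theorem preact_le_of_mem_Omega2 (hz : z ∈ Omega2 X) (i : Fin N₁) (n : Fin N) :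
    preact X z i n ≤ z.2.2.2 i n :=
  (le_max_left _ _).trans (hz i n)

theorem Fv_nonneg (X : Matrix (Fin N₀) (Fin N) ℝ) (z : Pt N N₀ N₁) : 0 ≤ Fv X z := by
  unfold Fv
  positivity

theorem Pv_nonneg (hβ : 0 ≤ β) (hz : z ∈ Omega2 X) : 0 ≤ Pv β X z :=
  mul_nonneg hβ (sum_nonneg fun n _ => sum_nonneg fun i _ => sub_nonneg.mpr (hz i n))

theorem le_of_mem_OmegaLev (hlam₁ : 0 ≤ lam₁) (hlam₂ : 0 ≤ lam₂) (hβ : 0 ≤ β)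
    (hz : z ∈ OmegaLev lam₁ lam₂ β θ X) :
    Fv X z ≤ θ ∧ lam₁ * ∑ n, ∑ i, z.2.2.2 i n ≤ θ ∧ lam₂ * ∑ i, ∑ j, z.1 i j ^ 2 ≤ θ := by
  obtain ⟨hz₂, hO⟩ := hz
  have hF := Fv_nonneg X z
  have hP := Pv_nonneg hβ hz₂
  have hV : 0 ≤ lam₁ * ∑ n, ∑ i, z.2.2.2 i n :=
    mul_nonneg hlam₁ (sum_nonneg fun n _ => sum_nonneg fun i _ => nonneg_of_mem_Omega2 hz₂ i n)
  have hW : 0 ≤ lam₂ * ∑ i, ∑ j, z.1 i j ^ 2 := by positivity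
  simp only [Ov, Rv] at hO
  exact ⟨by linarith, by linarith, by linarith⟩

variable (hlam₁ : 0 < lam₁) (hlam₂ : 0 < lam₂) (hβ : 0 ≤ β) (hz : z ∈ OmegaLev lam₁ lam₂ β θ X)
include hlam₁ hlam₂ hβ hz

theorem nonneg_of_mem_OmegaLev : 0 ≤ θ :=
  (Fv_nonneg X z).trans (le_of_mem_OmegaLev hlam₁.le hlam₂.le hβ hz).1

theorem sum_col_le_of_mem_OmegaLev (n : Fin N) : ∑ i, z.2.2.2 i n ≤ θ / lam₁ := by
  have hv := nonneg_of_mem_Omega2 hz.1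
  rw [le_div_iff₀ hlam₁, mul_comm]
  refine le_trans (mul_le_mul_of_nonneg_left ?_ hlam₁.le)
    (le_of_mem_OmegaLev hlam₁.le hlam₂.le hβ hz).2.1
  exact single_le_sum (f := fun n => ∑ i, z.2.2.2 i n) (fun n _ => sum_nonneg fun i _ => hv i n)
    (mem_univ n)

theorem abs_mulVec_add_le_alphaC (i : Fin N₁) (n : Fin N) :
    |∑ j, z.1 i j * X j n| + θ / lam₁ ≤ alphaC N N₀ N₁ lam₁ lam₂ θ X := by
  have hW := abs_le_sqrt_of_mul_sum_sq_le hlam₂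
    (le_of_mem_OmegaLev hlam₁.le hlam₂.le hβ hz).2.2 i
  have := (abs_sum_mul_le (x := fun j => X j n) hW).trans
    (mul_le_mul_of_nonneg_left (sum_abs_le_Xcol1 X n) (Real.sqrt_nonneg _))
  exact le_trans (by linarith) (le_max_left _ _)

theorem abs_vecMul_add_le_alphaC (j : Fin N₀) (n : Fin N) :
    |∑ i, z.1 i j * z.2.2.2 i n| + √(N * θ) + Xcol1 X ≤ alphaC N N₀ N₁ lam₁ lam₂ θ X := by
  have hv := nonneg_of_mem_Omega2 hz.1
  have hbound : |∑ i, z.1 i j * z.2.2.2 i n|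
      ≤ θ * √((N₁ : ℝ) * N₀ * θ) / (lam₁ * √lam₂) :=
    calc |∑ i, z.1 i j * z.2.2.2 i n|
        ≤ √((N₁ : ℝ) * N₀ * θ / lam₂) * ∑ i, |z.2.2.2 i n| :=
          abs_sum_mul_le fun i => abs_le_sqrt_of_mul_sum_sq_le hlam₂
            (le_of_mem_OmegaLev hlam₁.le hlam₂.le hβ hz).2.2 i j
      _ ≤ √((N₁ : ℝ) * N₀ * θ / lam₂) * (θ / lam₁) := by
          simp only [abs_of_nonneg (hv _ n)]
          exact mul_le_mul_of_nonneg_left (sum_col_le_of_mem_OmegaLev hlam₁ hlam₂ hβ hz n)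
            (Real.sqrt_nonneg _)
      _ = θ * √((N₁ : ℝ) * N₀ * θ) / (lam₁ * √lam₂) := by
          rw [Real.sqrt_div' _ hlam₂.le]
          field_simp
  exact le_trans (by linarith) (le_max_right _ _)

theorem alphaC_nonneg : 0 ≤ alphaC N N₀ N₁ lam₁ lam₂ θ X := by
  have hθ := nonneg_of_mem_OmegaLev hlam₁ hlam₂ hβ hz
  have hX := Xcol1_nonneg X
  exact le_trans (by positivity) (le_max_left _ _)

theorem mulVec_le_alphaC (i : Fin N₁) (n : Fin N) :
    ∑ j, z.1 i j * X j n ≤ alphaC N N₀ N₁ lam₁ lam₂ θ X := by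
  linarith [le_abs_self (∑ j, z.1 i j * X j n), abs_mulVec_add_le_alphaC hlam₁ hlam₂ hβ hz i n,
    div_nonneg (nonneg_of_mem_OmegaLev hlam₁ hlam₂ hβ hz) hlam₁.le]

theorem vecMul_le_alphaC (j : Fin N₀) (n : Fin N) :
    ∑ i, z.1 i j * z.2.2.2 i n ≤ alphaC N N₀ N₁ lam₁ lam₂ θ X := by
  linarith [le_abs_self (∑ i, z.1 i j * z.2.2.2 i n),
    abs_vecMul_add_le_alphaC hlam₁ hlam₂ hβ hz j n, Real.sqrt_nonneg (N * θ), Xcol1_nonneg X]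

theorem bias₁_le_alphaC (n : Fin N) (i : Fin N₁) : z.2.1 i ≤ alphaC N N₀ N₁ lam₁ lam₂ θ X := by
  have hv := nonneg_of_mem_Omega2 hz.1
  have hvin : z.2.2.2 i n ≤ θ / lam₁ :=
    (single_le_sum (fun i _ => hv i n) (mem_univ i)).trans
      (sum_col_le_of_mem_OmegaLev hlam₁ hlam₂ hβ hz n)
  have hpre : (∑ j, z.1 i j * X j n) + z.2.1 i ≤ z.2.2.2 i n := preact_le_of_mem_Omega2 hz.1 i n
  linarith [neg_abs_le (∑ j, z.1 i j * X j n), abs_mulVec_add_le_alphaC hlam₁ hlam₂ hβ hz i n]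

theorem bias₂_le_alphaC (n : Fin N) (j : Fin N₀) : z.2.2.1 j ≤ alphaC N N₀ N₁ lam₁ lam₂ θ X := by
  have hF := (le_of_mem_OmegaLev hlam₁.le hlam₂.le hβ hz).1
  have hN : (0 : ℝ) < N := by exact_mod_cast n.pos
  have hres : |relu (outPre z j n) - X j n| ≤ √(N * θ) := by
    apply Real.abs_le_sqrt
    refine (single_le_sum_sum (f := fun n j => (relu (outPre z j n) - X j n) ^ 2)
      (fun _ _ => sq_nonneg _) n j).trans ?_
    rwa [Fv, one_div, inv_mul_le_iff₀ hN] at hF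
  have hout : (∑ i, z.1 i j * z.2.2.2 i n) + z.2.2.1 j ≤ relu (outPre z j n) := le_max_left _ _
  linarith [(abs_le.mp hres).2, le_abs_self (X j n), abs_le_Xcol1 X j n,
    neg_abs_le (∑ i, z.1 i j * z.2.2.2 i n), abs_vecMul_add_le_alphaC hlam₁ hlam₂ hβ hz j n]

end LevelSet

section TruncBias

variable {N N₀ N₁ : ℕ} {X : Matrix (Fin N₀) (Fin N) ℝ} {A : ℝ} {z : Pt N N₀ N₁}

def truncBias (A : ℝ) (z : Pt N N₀ N₁) : Pt N N₀ N₁ :=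
  (z.1, fun i => max (z.2.1 i) (-A), fun j => max (z.2.2.1 j) (-A), z.2.2.2)

theorem relu_preact_truncBias (h : ∀ i n, ∑ j, z.1 i j * X j n ≤ A) (i : Fin N₁)
    (n : Fin N) : relu (preact X (truncBias A z) i n) = relu (preact X z i n) :=
  relu_add_max_neg_eq _ (h i n)

theorem relu_outPre_truncBias (h : ∀ j n, ∑ i, z.1 i j * z.2.2.2 i n ≤ A) (j : Fin N₀)
    (n : Fin N) : relu (outPre (truncBias A z) j n) = relu (outPre z j n) :=
  relu_add_max_neg_eq _ (h j n)

theorem truncBias_mem_Omega2 (h : ∀ i n, ∑ j, z.1 i j * X j n ≤ A) (hz : z ∈ Omega2 X) :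
    truncBias A z ∈ Omega2 X := fun i n => (relu_preact_truncBias h i n).trans_le (hz i n)

theorem Ov_truncBias (lam₁ lam₂ β : ℝ) (h₁ : ∀ i n, ∑ j, z.1 i j * X j n ≤ A)
    (h₂ : ∀ j n, ∑ i, z.1 i j * z.2.2.2 i n ≤ A) :
    Ov lam₁ lam₂ β X (truncBias A z) = Ov lam₁ lam₂ β X z := by
  simp only [Ov, Fv, Pv, relu_preact_truncBias h₁, relu_outPre_truncBias h₂]
  rfl

theorem truncBias_mem_Omega3 {lam₁ lam₂ θ : ℝ} (hα : 0 ≤ alphaC N N₀ N₁ lam₁ lam₂ θ X)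
    (h₁ : ∀ i, z.2.1 i ≤ alphaC N N₀ N₁ lam₁ lam₂ θ X)
    (h₂ : ∀ j, z.2.2.1 j ≤ alphaC N N₀ N₁ lam₁ lam₂ θ X) :
    truncBias (alphaC N N₀ N₁ lam₁ lam₂ θ X) z ∈ Omega3 lam₁ lam₂ θ X :=
  ⟨fun i => abs_le.mpr ⟨le_max_right _ _, max_le (h₁ i) (by linarith)⟩,
   fun j => abs_le.mpr ⟨le_max_right _ _, max_le (h₂ j) (by linarith)⟩⟩

theorem distPt_truncBias_le {w : Pt N N₀ N₁} (hw₁ : ∀ i, |w.2.1 i| ≤ A)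
    (hw₂ : ∀ j, |w.2.2.1 j| ≤ A) : distPt z (truncBias A z) ≤ distPt z w := by
  refine Real.sqrt_le_sqrt ?_
  simp only [sqnormPt, truncBias, Prod.fst_sub, Prod.snd_sub, Matrix.sub_apply, Pi.sub_apply,
    sub_self, ne_eq, OfNat.ofNat_ne_zero, not_false_eq_true, zero_pow, sum_const_zero,
    zero_add, add_zero]
  have hb₁ := sum_le_sum fun i (_ : i ∈ univ) => sq_sub_max_neg_le (z.2.1 i) (hw₁ i)
  have hb₂ := sum_le_sum fun j (_ : j ∈ univ) => sq_sub_max_neg_le (z.2.2.1 j) (hw₂ j)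
  have hW : 0 ≤ ∑ i, ∑ j, (z.1 i j - w.1 i j) ^ 2 := by positivity
  have hV : 0 ≤ ∑ i, ∑ n, (z.2.2.2 i n - w.2.2.2 i n) ^ 2 := by positivity
  linarith

end TruncBias

theorem stmt3_general (N N₀ N₁ : ℕ) (hN : 0 < N)
    (lam₁ lam₂ β θ : ℝ) (hlam₁ : 0 < lam₁) (hlam₂ : 0 < lam₂) (hbeta : 0 < β)
    (X : Matrix (Fin N₀) (Fin N) ℝ)
    (z : Pt N N₀ N₁) (hz : z ∈ OmegaLev lam₁ lam₂ β θ X)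
    (zb : Pt N N₀ N₁)
    (hzb : zb = (z.1, fun i => max (z.2.1 i) (-(alphaC N N₀ N₁ lam₁ lam₂ θ X)),
                 fun j => max (z.2.2.1 j) (-(alphaC N N₀ N₁ lam₁ lam₂ θ X)), z.2.2.2)) :
    zb ∈ Omega3 lam₁ lam₂ θ X ∧
    (∀ w : Pt N N₀ N₁, w ∈ Omega3 lam₁ lam₂ θ X → distPt z zb ≤ distPt z w) ∧
    zb ∈ Zset lam₁ lam₂ θ X ∧
    Ov lam₁ lam₂ β X zb = Ov lam₁ lam₂ β X z := by
  change zb = truncBias (alphaC N N₀ N₁ lam₁ lam₂ θ X) z at hzb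
  subst hzb
  have n₀ : Fin N := ⟨0, hN⟩
  have hWx := mulVec_le_alphaC hlam₁ hlam₂ hbeta.le hz
  have hWv := vecMul_le_alphaC hlam₁ hlam₂ hbeta.le hz
  have h₃ := truncBias_mem_Omega3 (alphaC_nonneg hlam₁ hlam₂ hbeta.le hz)
    (bias₁_le_alphaC hlam₁ hlam₂ hbeta.le hz n₀) (bias₂_le_alphaC hlam₁ hlam₂ hbeta.le hz n₀)
  exact ⟨h₃, fun w hw => distPt_truncBias_le hw.1 hw.2,
    ⟨truncBias_mem_Omega2 hWx hz.1, h₃⟩, Ov_truncBias lam₁ lam₂ β hWx hWv⟩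

theorem stmt3 (N N₀ N₁ : ℕ) (hN : 0 < N) (hN₀ : 0 < N₀) (hN₁ : 0 < N₁)
    (lam₁ lam₂ β θ : ℝ) (hlam₁ : 0 < lam₁) (hlam₂ : 0 < lam₂) (hbeta : 0 < β)
    (X : Matrix (Fin N₀) (Fin N) ℝ)
    (hθ : (1 / (N : ℝ)) * ∑ j, ∑ n, (X j n) ^ 2 < θ)
    (z : Pt N N₀ N₁) (hz : z ∈ OmegaLev lam₁ lam₂ β θ X)
    (zb : Pt N N₀ N₁)
    (hzb : zb = (z.1, fun i => max (z.2.1 i) (-(alphaC N N₀ N₁ lam₁ lam₂ θ X)),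
                 fun j => max (z.2.2.1 j) (-(alphaC N N₀ N₁ lam₁ lam₂ θ X)), z.2.2.2)) :
    zb ∈ Omega3 lam₁ lam₂ θ X ∧
    (∀ w : Pt N N₀ N₁, w ∈ Omega3 lam₁ lam₂ θ X → distPt z zb ≤ distPt z w) ∧
    zb ∈ Zset lam₁ lam₂ θ X ∧
    Ov lam₁ lam₂ β X zb = Ov lam₁ lam₂ β X z :=
  stmt3_general N N₀ N₁ hN lam₁ lam₂ β θ hlam₁ hlam₂ hbeta X z hz zb hzb
end
end

section
/- Let δ = 3θ + 2Nθ³/(λ₁²λ₂) and Ω_δ = {z ∈ Ω₂ : O(z) ≤ δ}. Suppose L_F and L_R are Lipschitz moduli of F and R on Ω_δ, β > L_F + L_R, and β ≥ λ₁. If z̄ ∈ Ω_θ is a global minimizer of O over Ω₂, then z̄ ∈ Ω₁ and z̄ is a global minimizer of F + R over Ω₁. -/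
open scoped BigOperators

noncomputable section

variable {N N₀ N₁ : ℕ}

/-! Exact penalty argument. Replacing the hidden layer `V` of `z ∈ Ω₂` by `(W xₙ + b₁)₊` gives a
point `π z ∈ Ω₁` whose distance to `z` is at most the slack `s(z) = P(z) / β`, with `R(π z) ≤ R(z)`
and `F(π z) ≤ 2 F(z) + (2/N) ‖W‖_F² s(z)²`. On `Ω_θ` we have `λ₂ ‖W‖_F² ≤ θ` and
`λ₁ s ≤ β s ≤ θ`, which puts `π z̄` (and hence, by minimality, `z̄`) in `Ω_δ`. Comparing
`O(z̄) ≤ O(π z̄)` through the Lipschitz bounds gives `β s(z̄) ≤ (L_F + L_R) s(z̄)`, so `s(z̄) = 0`;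
on `Ω₁` the penalty vanishes and `O = F + R`. -/

open Finset

lemma sq_relu_sub_le (a a' x : ℝ) :
    (relu a' - x) ^ 2 ≤ 2 * (relu a - x) ^ 2 + 2 * (a' - a) ^ 2 := by
  have hrelu : (relu a' - relu a) ^ 2 ≤ (a' - a) ^ 2 :=
    sq_le_sq.2 (abs_max_sub_max_le_abs a' a 0)
  calc (relu a' - x) ^ 2 = ((relu a - x) + (relu a' - relu a)) ^ 2 := by ring
    _ ≤ 2 * ((relu a - x) ^ 2 + (relu a' - relu a) ^ 2) := add_sq_le
    _ ≤ 2 * (relu a - x) ^ 2 + 2 * (a' - a) ^ 2 := by linarith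

lemma natCast_inv_le_natCast (n : ℕ) : (n : ℝ)⁻¹ ≤ n := by
  rcases Nat.eq_zero_or_pos n with rfl | hn
  · simp
  · exact (Nat.cast_inv_le_one n).trans (by exact_mod_cast hn)

lemma eq_zero_of_add_mul_le_of_sub_le {g g' β L s d : ℝ} (hβ : 0 < β) (hL : L < β)
    (hd : 0 ≤ d) (hds : d ≤ s) (hmin : g + β * s ≤ g') (hlip : g' - g ≤ L * d) : s = 0 := by
  have hβs : β * s ≤ L * d := by linarith
  refine le_antisymm ?_ (hd.trans hds)
  by_contra! hs
  rcases le_or_gt 0 L with hL0 | hL0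
  · nlinarith [mul_le_mul_of_nonneg_left hds hL0]
  · nlinarith [mul_nonpos_of_nonpos_of_nonneg hL0.le hd]

variable {X : Matrix (Fin N₀) (Fin N) ℝ} {z z' : Pt N N₀ N₁} {lam₁ lam₂ β θ : ℝ}

def projOmega1 (X : Matrix (Fin N₀) (Fin N) ℝ) (z : Pt N N₀ N₁) : Pt N N₀ N₁ :=
  (z.1, z.2.1, z.2.2.1, Matrix.of fun i n => relu (preact X z i n))

def slack (X : Matrix (Fin N₀) (Fin N) ℝ) (z : Pt N N₀ N₁) : ℝ :=
  ∑ n, ∑ i, (z.2.2.2 i n - relu (preact X z i n))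

lemma Pv_eq_mul_slack : Pv β X z = β * slack X z := rfl

lemma projOmega1_mem_Omega1 : projOmega1 X z ∈ Omega1 X := fun _ _ => rfl

lemma Omega1_subset_Omega2 : (Omega1 X : Set (Pt N N₀ N₁)) ⊆ Omega2 X :=
  fun _ hz i n => (hz i n).ge

lemma slack_eq_zero_of_mem_Omega1 (hz : z ∈ Omega1 X) : slack X z = 0 :=
  sum_eq_zero fun n _ => sum_eq_zero fun i _ => sub_eq_zero.2 (hz i n)

lemma slack_nonneg (hz : z ∈ Omega2 X) : 0 ≤ slack X z :=
  sum_nonneg fun n _ => sum_nonneg fun i _ => sub_nonneg.2 (hz i n)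

lemma sum_hidden_nonneg (hz : z ∈ Omega2 X) : 0 ≤ ∑ n, ∑ i, z.2.2.2 i n :=
  sum_nonneg fun n _ => sum_nonneg fun i _ => (le_max_right _ _).trans (hz i n)

lemma Fv_nonneg_s8 : 0 ≤ Fv X z := by
  unfold Fv; positivity

lemma mem_Omega1_of_slack_eq_zero (hz : z ∈ Omega2 X) (h : slack X z = 0) : z ∈ Omega1 X := by
  intro i n
  have hterm := (sum_eq_zero_iff_of_nonneg fun n _ =>
    sum_nonneg fun i _ => sub_nonneg.2 (hz i n)).1 h n (mem_univ n)
  exact sub_eq_zero.1 ((sum_eq_zero_iff_of_nonneg fun i _ =>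
    sub_nonneg.2 (hz i n)).1 hterm i (mem_univ i))

lemma sum_sq_sub_relu_le_slack_sq (hz : z ∈ Omega2 X) :
    ∑ n, ∑ i, (z.2.2.2 i n - relu (preact X z i n)) ^ 2 ≤ slack X z ^ 2 := by
  have hd : ∀ i n, 0 ≤ z.2.2.2 i n - relu (preact X z i n) := fun i n => sub_nonneg.2 (hz i n)
  calc ∑ n, ∑ i, (z.2.2.2 i n - relu (preact X z i n)) ^ 2
      ≤ ∑ n, (∑ i, (z.2.2.2 i n - relu (preact X z i n))) ^ 2 :=
        sum_le_sum fun n _ => sum_sq_le_sq_sum_of_nonneg fun i _ => hd i n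
    _ ≤ slack X z ^ 2 :=
        sum_sq_le_sq_sum_of_nonneg fun n _ => sum_nonneg fun i _ => hd i n

lemma distPt_projOmega1_le (hz : z ∈ Omega2 X) : distPt z (projOmega1 X z) ≤ slack X z := by
  have hsq : sqnormPt (z - projOmega1 X z)
      = ∑ n, ∑ i, (z.2.2.2 i n - relu (preact X z i n)) ^ 2 := by
    simp [sqnormPt, projOmega1, sum_comm (γ := Fin N)]
  rw [distPt, normPt, hsq, ← Real.sqrt_sq (slack_nonneg hz)]
  exact Real.sqrt_le_sqrt (sum_sq_sub_relu_le_slack_sq hz)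

lemma Rv_projOmega1_le (hlam₁ : 0 ≤ lam₁) (hz : z ∈ Omega2 X) :
    Rv lam₁ lam₂ (projOmega1 X z) ≤ Rv lam₁ lam₂ z := by
  have hv : ∑ n, ∑ i, (projOmega1 X z).2.2.2 i n ≤ ∑ n, ∑ i, z.2.2.2 i n :=
    sum_le_sum fun n _ => sum_le_sum fun i _ => hz i n
  exact add_le_add_left (mul_le_mul_of_nonneg_left hv hlam₁) _

lemma Ov_eq_of_mem_Omega1 (hz : z ∈ Omega1 X) :
    Ov lam₁ lam₂ β X z = Fv X z + Rv lam₁ lam₂ z := by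
  rw [Ov, Pv_eq_mul_slack, slack_eq_zero_of_mem_Omega1 hz, mul_zero, add_zero]

lemma sq_outPre_sub_le (hW : z'.1 = z.1) (hb : z'.2.2.1 = z.2.2.1) (j : Fin N₀) (n : Fin N) :
    (outPre z' j n - outPre z j n) ^ 2
      ≤ (∑ i, z.1 i j ^ 2) * ∑ i, (z'.2.2.2 i n - z.2.2.2 i n) ^ 2 := by
  have h : outPre z' j n - outPre z j n = ∑ i, z.1 i j * (z'.2.2.2 i n - z.2.2.2 i n) := by
    simp only [outPre, hW, hb, mul_sub, sum_sub_distrib]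
    ring
  rw [h]
  exact sum_mul_sq_le_sq_mul_sq _ _ _

lemma Fv_le_of_eq_W_of_eq_b₂ (hW : z'.1 = z.1) (hb : z'.2.2.1 = z.2.2.1) :
    Fv X z' ≤ 2 * Fv X z
      + 2 / N * ((∑ i, ∑ j, z.1 i j ^ 2) * ∑ n, ∑ i, (z'.2.2.2 i n - z.2.2.2 i n) ^ 2) := by
  have hsum : ∑ n, ∑ j, (relu (outPre z' j n) - X j n) ^ 2
      ≤ ∑ n, ∑ j, (2 * (relu (outPre z j n) - X j n) ^ 2
          + 2 * ((∑ i, z.1 i j ^ 2) * ∑ i, (z'.2.2.2 i n - z.2.2.2 i n) ^ 2)) :=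
    sum_le_sum fun n _ => sum_le_sum fun j _ =>
      (sq_relu_sub_le _ _ _).trans (by gcongr; exact sq_outPre_sub_le hW hb j n)
  have hsplit : ∑ n, ∑ j, (2 * (relu (outPre z j n) - X j n) ^ 2
          + 2 * ((∑ i, z.1 i j ^ 2) * ∑ i, (z'.2.2.2 i n - z.2.2.2 i n) ^ 2))
      = 2 * ∑ n, ∑ j, (relu (outPre z j n) - X j n) ^ 2
        + 2 * ((∑ i, ∑ j, z.1 i j ^ 2) * ∑ n, ∑ i, (z'.2.2.2 i n - z.2.2.2 i n) ^ 2) := by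
    simp only [sum_add_distrib, ← mul_sum, ← sum_mul]
    rw [sum_comm (s := (univ : Finset (Fin N₁)))]
  rw [Fv, Fv]
  calc 1 / (N : ℝ) * ∑ n, ∑ j, (relu (outPre z' j n) - X j n) ^ 2
      ≤ 1 / (N : ℝ) * (2 * ∑ n, ∑ j, (relu (outPre z j n) - X j n) ^ 2
        + 2 * ((∑ i, ∑ j, z.1 i j ^ 2) * ∑ n, ∑ i, (z'.2.2.2 i n - z.2.2.2 i n) ^ 2)) := by
        rw [← hsplit]; gcongr
    _ = _ := by ring

lemma Fv_projOmega1_le (hz : z ∈ Omega2 X) :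
    Fv X (projOmega1 X z) ≤ 2 * Fv X z + 2 / N * ((∑ i, ∑ j, z.1 i j ^ 2) * slack X z ^ 2) := by
  have hV : ∑ n, ∑ i, ((projOmega1 X z).2.2.2 i n - z.2.2.2 i n) ^ 2 ≤ slack X z ^ 2 :=
    (le_of_eq (sum_congr rfl fun n _ => sum_congr rfl fun i _ => by
      simp only [projOmega1, Matrix.of_apply]; ring)).trans (sum_sq_sub_relu_le_slack_sq hz)
  have hW : 0 ≤ ∑ i, ∑ j, z.1 i j ^ 2 := by positivity
  have hF := Fv_le_of_eq_W_of_eq_b₂ (X := X) (z := z) (z' := projOmega1 X z) rfl rfl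
  have hN : 0 ≤ 2 / (N : ℝ) := by positivity
  have := mul_le_mul_of_nonneg_left (mul_le_mul_of_nonneg_left hV hW) hN
  linarith

lemma two_div_mul_mul_sq_le (n : ℕ) {w s : ℝ} (hlam₁ : 0 < lam₁) (hlam₂ : 0 < lam₂)
    (hw : 0 ≤ w) (hs : 0 ≤ s) (hwθ : lam₂ * w ≤ θ) (hsθ : lam₁ * s ≤ θ) :
    2 / n * (w * s ^ 2) ≤ 2 * n * θ ^ 3 / (lam₁ ^ 2 * lam₂) := by
  have hws : w * s ^ 2 ≤ θ ^ 3 / (lam₁ ^ 2 * lam₂) := by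
    rw [le_div_iff₀ (by positivity)]
    calc w * s ^ 2 * (lam₁ ^ 2 * lam₂) = (lam₂ * w) * (lam₁ * s) ^ 2 := by ring
      _ ≤ θ * θ ^ 2 := mul_le_mul hwθ (pow_le_pow_left₀ (by positivity) hsθ 2) (by positivity)
          ((mul_nonneg hlam₂.le hw).trans hwθ)
      _ = θ ^ 3 := by ring
  have hn : 2 / (n : ℝ) ≤ 2 * n := by
    rw [div_eq_mul_inv]
    exact mul_le_mul_of_nonneg_left (natCast_inv_le_natCast n) zero_le_two
  calc 2 / (n : ℝ) * (w * s ^ 2) ≤ 2 * n * (w * s ^ 2) := by gcongr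
    _ ≤ 2 * n * (θ ^ 3 / (lam₁ ^ 2 * lam₂)) := by gcongr
    _ = 2 * n * θ ^ 3 / (lam₁ ^ 2 * lam₂) := by ring

lemma Ov_projOmega1_le (hlam₁ : 0 < lam₁) (hlam₂ : 0 < lam₂) (hbl : lam₁ ≤ β)
    (hz : z ∈ OmegaLev lam₁ lam₂ β θ X) :
    Ov lam₁ lam₂ β X (projOmega1 X z) ≤ 3 * θ + 2 * N * θ ^ 3 / (lam₁ ^ 2 * lam₂) := by
  obtain ⟨hz2, hOz⟩ := hz
  have hFp := Fv_projOmega1_le hz2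
  have hRp := Rv_projOmega1_le (lam₂ := lam₂) hlam₁.le hz2
  rw [Ov_eq_of_mem_Omega1 projOmega1_mem_Omega1]
  set W := ∑ i, ∑ j, z.1 i j ^ 2
  have hS := slack_nonneg hz2
  have hW : 0 ≤ W := by positivity
  have hR : Rv lam₁ lam₂ z = lam₁ * (∑ n, ∑ i, z.2.2.2 i n) + lam₂ * W := rfl
  have hO : Ov lam₁ lam₂ β X z = Fv X z + Rv lam₁ lam₂ z + β * slack X z := rfl
  have hF := Fv_nonneg_s8 (X := X) (z := z)
  have hV := mul_nonneg hlam₁.le (sum_hidden_nonneg hz2)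
  have hlamW := mul_nonneg hlam₂.le hW
  have hlamS := mul_nonneg hlam₁.le hS
  have hβS : lam₁ * slack X z ≤ β * slack X z := mul_le_mul_of_nonneg_right hbl hS
  have hkey := two_div_mul_mul_sq_le N (θ := θ) hlam₁ hlam₂ hW hS (by linarith) (by linarith)
  linarith

theorem stmt8_general (N N₀ N₁ : ℕ)
    (lam₁ lam₂ β θ : ℝ) (hlam₁ : 0 < lam₁) (hlam₂ : 0 < lam₂) (hbeta : 0 < β)
    (X : Matrix (Fin N₀) (Fin N) ℝ)
    (δ : ℝ) (hδ : δ = 3 * θ + 2 * (N : ℝ) * θ ^ 3 / (lam₁ ^ 2 * lam₂))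
    (LF LR : ℝ)
    (hLipF : ∀ z : Pt N N₀ N₁, z ∈ OmegaLev lam₁ lam₂ β δ X →
      ∀ z' : Pt N N₀ N₁, z' ∈ OmegaLev lam₁ lam₂ β δ X →
        |Fv X z - Fv X z'| ≤ LF * distPt z z')
    (hLipR : ∀ z : Pt N N₀ N₁, z ∈ OmegaLev lam₁ lam₂ β δ X →
      ∀ z' : Pt N N₀ N₁, z' ∈ OmegaLev lam₁ lam₂ β δ X →
        |Rv lam₁ lam₂ z - Rv lam₁ lam₂ z'| ≤ LR * distPt z z')
    (hpen : LF + LR < β) (hbl : lam₁ ≤ β)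
    (zb : Pt N N₀ N₁) (hzbLev : zb ∈ OmegaLev lam₁ lam₂ β θ X)
    (hmin : ∀ z : Pt N N₀ N₁, z ∈ Omega2 X → Ov lam₁ lam₂ β X zb ≤ Ov lam₁ lam₂ β X z) :
    zb ∈ Omega1 X ∧
    ∀ z : Pt N N₀ N₁, z ∈ Omega1 X →
      Fv X zb + Rv lam₁ lam₂ zb ≤ Fv X z + Rv lam₁ lam₂ z := by
  set zp := projOmega1 X zb
  have hzp1 : zp ∈ Omega1 X := projOmega1_mem_Omega1
  have hzp : zp ∈ OmegaLev lam₁ lam₂ β δ X :=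
    ⟨Omega1_subset_Omega2 hzp1, hδ ▸ Ov_projOmega1_le hlam₁ hlam₂ hbl hzbLev⟩
  have hzb : zb ∈ OmegaLev lam₁ lam₂ β δ X := ⟨hzbLev.1, (hmin zp hzp.1).trans hzp.2⟩
  have hOzp : Fv X zb + Rv lam₁ lam₂ zb + β * slack X zb ≤ Fv X zp + Rv lam₁ lam₂ zp :=
    Ov_eq_of_mem_Omega1 hzp1 ▸ hmin zp hzp.1
  have hLip : Fv X zp + Rv lam₁ lam₂ zp - (Fv X zb + Rv lam₁ lam₂ zb)
      ≤ (LF + LR) * distPt zb zp := by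
    have hF := (abs_le.1 (hLipF zb hzb zp hzp)).1
    have hR := (abs_le.1 (hLipR zb hzb zp hzp)).1
    linarith
  have hslack : slack X zb = 0 :=
    eq_zero_of_add_mul_le_of_sub_le hbeta hpen (Real.sqrt_nonneg _)
      (distPt_projOmega1_le hzbLev.1) hOzp hLip
  have hzb1 := mem_Omega1_of_slack_eq_zero hzbLev.1 hslack
  refine ⟨hzb1, fun z hz => ?_⟩
  simpa only [Ov_eq_of_mem_Omega1 hzb1, Ov_eq_of_mem_Omega1 hz]
    using hmin z (Omega1_subset_Omega2 hz)

theorem stmt8 (N N₀ N₁ : ℕ) (hN : 0 < N) (hN₀ : 0 < N₀) (hN₁ : 0 < N₁)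
    (lam₁ lam₂ β θ : ℝ) (hlam₁ : 0 < lam₁) (hlam₂ : 0 < lam₂) (hbeta : 0 < β)
    (X : Matrix (Fin N₀) (Fin N) ℝ)
    (hθ : (1 / (N : ℝ)) * ∑ j, ∑ n, (X j n) ^ 2 < θ)
    (δ : ℝ) (hδ : δ = 3 * θ + 2 * (N : ℝ) * θ ^ 3 / (lam₁ ^ 2 * lam₂))
    (LF LR : ℝ) (hLF : 0 ≤ LF) (hLR : 0 ≤ LR)
    (hLipF : ∀ z : Pt N N₀ N₁, z ∈ OmegaLev lam₁ lam₂ β δ X →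
      ∀ z' : Pt N N₀ N₁, z' ∈ OmegaLev lam₁ lam₂ β δ X →
        |Fv X z - Fv X z'| ≤ LF * distPt z z')
    (hLipR : ∀ z : Pt N N₀ N₁, z ∈ OmegaLev lam₁ lam₂ β δ X →
      ∀ z' : Pt N N₀ N₁, z' ∈ OmegaLev lam₁ lam₂ β δ X →
        |Rv lam₁ lam₂ z - Rv lam₁ lam₂ z'| ≤ LR * distPt z z')
    (hpen : LF + LR < β) (hbl : lam₁ ≤ β)
    (zb : Pt N N₀ N₁) (hzbLev : zb ∈ OmegaLev lam₁ lam₂ β θ X)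
    (hzb2 : zb ∈ Omega2 X)
    (hmin : ∀ z : Pt N N₀ N₁, z ∈ Omega2 X → Ov lam₁ lam₂ β X zb ≤ Ov lam₁ lam₂ β X z) :
    zb ∈ Omega1 X ∧
    ∀ z : Pt N N₀ N₁, z ∈ Omega1 X →
      Fv X zb + Rv lam₁ lam₂ zb ≤ Fv X z + Rv lam₁ lam₂ z :=
  stmt8_general N N₀ N₁ lam₁ lam₂ β θ hlam₁ hlam₂ hbeta X δ hδ LF LR hLipF hLipR hpen hbl zb hzbLev
    hmin
end
end
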